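/- arXiv:1310.7103 — 4 statements merged into one kernel-verified Lean document; each statement's English description precedes it below -/
import Mathlib

section
/- For all nonnegative integers n and positive integers k, the Changhee number of the second kind with order k satisfies Ĉh_n^{(k)} = Σ_{m=0}^{n} m! binomial(k,m) binomial(n,m) Ch_{n-m}^{(k)}. -/
open PowerSeries Finset

/-- Higher-order Changhee numbers of the first kind. -/
noncomputable def Ch (k n : ℕ) : ℚ := (-1/2)^n * n.factorial * ((n+k-1).choose n)

/-- Signed Stirling numbers of the first kind, via coefficients of the falling factorial. -/
noncomputable def stirling1 (n l : ℕ) : ℚ :=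
  (∏ i ∈ Finset.range n, (Polynomial.X - (i : Polynomial ℚ))).coeff l

/-- Stirling numbers of the second kind, via (e^t-1)^n = n! Σ S₂(m,n) t^m/m!. -/
noncomputable def stirling2 (m n : ℕ) : ℚ :=
  (m.factorial : ℚ) / n.factorial * PowerSeries.coeff m ((PowerSeries.exp ℚ - 1)^n)

/-- Higher-order Euler numbers, from (2/(e^t+1))^k. -/
noncomputable def EulerN (k l : ℕ) : ℚ :=
  l.factorial * PowerSeries.coeff l ((2 * (PowerSeries.exp ℚ + 1)⁻¹)^k)

/-- Higher-order Euler polynomials, from (2/(e^t+1))^k e^{xt}. -/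
noncomputable def EulerP (k : ℕ) (x : ℚ) (l : ℕ) : ℚ :=
  l.factorial * PowerSeries.coeff l
    ((2 * (PowerSeries.exp ℚ + 1)⁻¹)^k * PowerSeries.rescale x (PowerSeries.exp ℚ))

/-- Generalized binomial coefficient. -/
noncomputable def gbinom (x : ℚ) (m : ℕ) : ℚ := (∏ i ∈ Finset.range m, (x - i)) / m.factorial

/-- Binomial series (1+t)^x. -/
noncomputable def onePlusXPow (x : ℚ) : PowerSeries ℚ := PowerSeries.mk fun m => gbinom x m

/-- Higher-order Changhee polynomials of the first kind, from (2/(2+t))^k (1+t)^x. -/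
noncomputable def ChP (k : ℕ) (x : ℚ) (n : ℕ) : ℚ :=
  n.factorial * PowerSeries.coeff n
    ((2 * (2 + PowerSeries.X : PowerSeries ℚ)⁻¹)^k * onePlusXPow x)

/-- Higher-order Changhee numbers of the second kind, from (2/(2+t))^k (1+t)^k. -/
noncomputable def ChhN (k n : ℕ) : ℚ :=
  n.factorial * PowerSeries.coeff n
    ((2 * (2 + PowerSeries.X : PowerSeries ℚ)⁻¹)^k * (1 + PowerSeries.X)^k)

/-- Higher-order Changhee polynomials of the second kind, from (2/(2+t))^k (1+t)^{x+k}. -/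
noncomputable def ChP2 (k : ℕ) (x : ℚ) (n : ℕ) : ℚ :=
  n.factorial * PowerSeries.coeff n
    ((2 * (2 + PowerSeries.X : PowerSeries ℚ)⁻¹)^k * onePlusXPow (x + k))

/-! Since `2/(2+t) = 1/(1 + t/2)` is the geometric series rescaled by `-1/2`, the series
`(2/(2+t))^k` is the exponential generating function of `Ch_n^{(k)}`, while `(1+t)^k` is that of
`m! binomial(k,m)`. The identity is the binomial convolution of these two exponential generating
functions. -/

namespace PowerSeries

theorem coeff_one_add_X_pow (R : Type*) [Semiring R] (k m : ℕ) :
    coeff m ((1 + X : R⟦X⟧) ^ k) = k.choose m := by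
  rw [← Polynomial.coeff_one_add_X_pow R, ← Polynomial.coeff_coe]
  push_cast
  rfl

theorem coeff_mk_one_pow (R : Type*) [CommRing R] (k n : ℕ) :
    coeff n ((mk 1 : R⟦X⟧) ^ k) = (n + k - 1).choose n := by
  cases k with
  | zero => cases n <;> simp [coeff_one]
  | succ d =>
    rw [mk_one_pow_eq_mk_choose_add, coeff_mk, Nat.choose_symm_add, add_comm d n,
      Nat.add_succ_sub_one]

theorem C_mul_inv_C_add_X {K : Type*} [Field K] {c : K} (hc : c ≠ 0) :
    C c * (C c + X)⁻¹ = rescale (-c⁻¹) (mk 1) := by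
  symm
  rw [eq_mul_inv_iff_mul_eq (by simpa using hc)]
  have factor : C c + X = C c * rescale (-c⁻¹) (1 - X) := by
    rw [map_sub, map_one, rescale_X, mul_sub, mul_one, ← mul_assoc, ← map_mul]
    field_simp
    simp
  rw [factor, mul_left_comm, ← map_mul, mk_one_mul_one_sub_eq_one, map_one, mul_one]

theorem factorial_mul_coeff_mul {R : Type*} [CommSemiring R] (f g : R⟦X⟧) (n : ℕ) :
    n.factorial * coeff n (f * g) = ∑ m ∈ range (n + 1),
      n.choose m * (m.factorial * coeff m f) * ((n - m).factorial * coeff (n - m) g) := by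
  rw [coeff_mul, Nat.sum_antidiagonal_eq_sum_range_succ_mk, mul_sum]
  refine sum_congr rfl fun m hm => ?_
  rw [← Nat.choose_mul_factorial_mul_factorial (Nat.lt_succ_iff.mp (mem_range.mp hm))]
  push_cast
  ring

end PowerSeries

theorem factorial_mul_coeff_changhee_gf (k n : ℕ) :
    n.factorial * coeff n ((2 * (2 + X : ℚ⟦X⟧)⁻¹) ^ k) = Ch k n := by
  rw [← map_ofNat C 2, C_mul_inv_C_add_X two_ne_zero, ← map_pow, coeff_rescale,
    coeff_mk_one_pow, Ch]
  norm_num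
  ring

theorem changhee2_eq_sum_general (n : ℕ) (k : ℕ) :
    ChhN k n = ∑ m ∈ Finset.range (n+1),
      (m.factorial : ℚ) * (k.choose m) * (n.choose m) * Ch k (n-m) := by
  rw [ChhN, mul_comm ((2 * _) ^ k), factorial_mul_coeff_mul]
  refine sum_congr rfl fun m _ => ?_
  rw [coeff_one_add_X_pow, factorial_mul_coeff_changhee_gf]
  ring

theorem changhee2_eq_sum (n : ℕ) (k : ℕ) (hk : 0 < k) :
    ChhN k n = ∑ m ∈ Finset.range (n+1),
      (m.factorial : ℚ) * (k.choose m) * (n.choose m) * Ch k (n-m) :=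
  changhee2_eq_sum_general n k
end

section
/- For all nonnegative integers n and positive integers k, Ĉh_n^{(k)} = Σ_{l=0}^{n} (-1)^l s(n,l) E_l^{(k)}, where s(n,l) are the signed Stirling numbers of the first kind and E_l^{(k)} the higher-order Euler numbers. -/
open PowerSeries Finset

/-!
Put `G(u) = (2 / (2 + u))^k`. The Euler generating function is `G(e^t - 1)` and the Changhee one
is `G((1 + t)⁻¹ - 1)`, because `(2 / (2 + t)) (1 + t) = 2 / (1 + (1 + t)⁻¹)`. The functional
`f ↦ ∑_{l ≤ n} (-1)^l s(n,l) l! [t^l] f` sends `e^{at}` to `n! [t^n] (1 + t)^{-a}`, as both equal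
`(-a)(-a-1)⋯(-a-n+1)`. By linearity it sends `Q(e^t)` to `n! [t^n] Q((1 + t)⁻¹)` for every
polynomial `Q`, and as only coefficients up to `t^n` are involved, `G` may be replaced by its
truncation at degree `n`.
-/

open scoped Nat

theorem prod_range_X_sub_natCast_eq_descPochhammer (R : Type*) [CommRing R] (n : ℕ) :
    ∏ i ∈ range n, (Polynomial.X - (i : Polynomial R)) = descPochhammer R n := by
  induction n with
  | zero => simp
  | succ n ih => rw [prod_range_succ, ih, descPochhammer_succ_right]

theorem sum_stirling1_mul_pow (n : ℕ) (x : ℚ) :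
    ∑ l ∈ range (n + 1), stirling1 n l * x ^ l = (descPochhammer ℚ n).eval x := by
  simp only [Polynomial.eval_eq_sum_range, descPochhammer_natDegree, stirling1,
    prod_range_X_sub_natCast_eq_descPochhammer]

namespace PowerSeries

variable {K : Type*} [Field K]

theorem subst_inv {u : K⟦X⟧} (hu : HasSubst u) {w : K⟦X⟧} (hw : constantCoeff w ≠ 0) :
    (w⁻¹).subst u = (w.subst u)⁻¹ := by
  have h : (w⁻¹).subst u * w.subst u = 1 := by
    rw [← subst_mul hu, PowerSeries.inv_mul_cancel _ hw, ← coe_substAlgHom hu, map_one]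
  have h0 : constantCoeff ((w⁻¹).subst u) * constantCoeff (w.subst u) = 1 := by
    rw [← map_mul, h, map_one]
  rw [eq_inv_iff_mul_eq_one (right_ne_zero_of_mul_eq_one h0), h]

theorem coeff_subst_eq_coeff_aeval_trunc {R : Type*} [CommRing R] {u : R⟦X⟧}
    (hu : constantCoeff u = 0) (G : R⟦X⟧) {l N : ℕ} (hl : l < N) :
    coeff l (G.subst u) = coeff l (Polynomial.aeval u (trunc N G)) := by
  have hsubst := HasSubst.of_constantCoeff_zero' hu
  obtain ⟨w, hw⟩ : X ^ N ∣ u ^ N := pow_dvd_pow_of_dvd (X_dvd_iff.2 hu) N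
  conv_lhs => rw [eq_X_pow_mul_shift_add_trunc N G]
  rw [subst_add hsubst, subst_mul hsubst, subst_pow hsubst, subst_X hsubst, subst_coe hsubst,
    map_add, hw, mul_assoc, coeff_X_pow_mul', if_neg (by omega), zero_add]

variable [CharZero K]

theorem factorial_mul_coeff_binomialSeries (n : ℕ) (a : K) :
    n ! * coeff n (binomialSeries K a) = (descPochhammer K n).eval a := by
  rw [binomialSeries_coeff, smul_eq_mul, mul_one, Ring.choose_eq_smul, smul_eq_mul,
    ← Polynomial.aeval_eq_smeval, ← descPochhammer_map (algebraMap ℤ K),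
    Polynomial.eval_map_algebraMap]
  have : (n ! : K) ≠ 0 := Nat.cast_ne_zero.2 n.factorial_ne_zero
  field_simp

theorem binomialSeries_neg_one : binomialSeries K (-1 : K) = (1 + X)⁻¹ := by
  rw [eq_inv_iff_mul_eq_one (by simp), ← pow_one (1 + X : K⟦X⟧), ← Nat.cast_one,
    ← binomialSeries_nat (R := K), ← binomialSeries_add]
  simp

theorem binomialSeries_neg_natCast (i : ℕ) :
    binomialSeries K (-(i : K)) = (1 + X)⁻¹ ^ i := by
  induction i with
  | zero => simp
  | succ i ih =>
    rw [pow_succ, ← ih, ← binomialSeries_neg_one, ← binomialSeries_add]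
    push_cast
    ring_nf

end PowerSeries

noncomputable def stirlingTransform (n : ℕ) : ℚ⟦X⟧ →ₗ[ℚ] ℚ :=
  ∑ l ∈ range (n + 1), ((-1) ^ l * stirling1 n l * l !) • coeff l

theorem stirlingTransform_apply (n : ℕ) (f : ℚ⟦X⟧) :
    stirlingTransform n f
      = ∑ l ∈ range (n + 1), (-1) ^ l * stirling1 n l * (l ! * coeff l f) := by
  simp [stirlingTransform, mul_assoc]

theorem stirlingTransform_rescale_exp (n : ℕ) (a : ℚ) :
    stirlingTransform n (rescale a (exp ℚ)) = n ! * coeff n (binomialSeries ℚ (-a)) := by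
  rw [stirlingTransform_apply, factorial_mul_coeff_binomialSeries, ← sum_stirling1_mul_pow]
  refine sum_congr rfl fun l _ => ?_
  rw [coeff_rescale, coeff_exp, Algebra.algebraMap_self_apply, neg_pow a]
  field_simp

theorem stirlingTransform_exp_pow (n i : ℕ) :
    stirlingTransform n (exp ℚ ^ i) = n ! * coeff n ((1 + X : ℚ⟦X⟧)⁻¹ ^ i) := by
  rw [exp_pow_eq_rescale_exp, stirlingTransform_rescale_exp, binomialSeries_neg_natCast]

theorem stirlingTransform_aeval_exp (n : ℕ) (Q : Polynomial ℚ) :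
    stirlingTransform n (Polynomial.aeval (exp ℚ) Q)
      = n ! * coeff n (Polynomial.aeval (1 + X : ℚ⟦X⟧)⁻¹ Q) := by
  simp only [Polynomial.aeval_eq_sum_range, map_sum, map_smul, stirlingTransform_exp_pow,
    mul_sum, smul_eq_mul]
  exact sum_congr rfl fun i _ => by ring

theorem stirlingTransform_subst_exp_sub_one (n : ℕ) (G : ℚ⟦X⟧) :
    stirlingTransform n (G.subst (exp ℚ - 1))
      = n ! * coeff n (G.subst ((1 + X : ℚ⟦X⟧)⁻¹ - 1)) := by
  set P := trunc (n + 1) G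
  have hexp : stirlingTransform n (G.subst (exp ℚ - 1))
      = stirlingTransform n (Polynomial.aeval (exp ℚ - 1) P) := by
    simp only [stirlingTransform_apply]
    refine sum_congr rfl fun l hl => ?_
    rw [coeff_subst_eq_coeff_aeval_trunc (by simp) G (mem_range.1 hl)]
  have hinv : coeff n (G.subst ((1 + X : ℚ⟦X⟧)⁻¹ - 1))
      = coeff n (Polynomial.aeval ((1 + X : ℚ⟦X⟧)⁻¹ - 1) P) :=
    coeff_subst_eq_coeff_aeval_trunc (by simp) G n.lt_succ_self
  have hshift := stirlingTransform_aeval_exp n (P.comp (Polynomial.X - 1))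
  simpa only [Polynomial.aeval_comp, map_sub, Polynomial.aeval_X, map_one, hexp, hinv] using hshift

theorem constantCoeff_two_add_X_ne_zero : constantCoeff (2 + X : ℚ⟦X⟧) ≠ 0 := by
  simp [map_ofNat]

theorem subst_two_mul_inv_two_add_X_pow {u : ℚ⟦X⟧} (hu : constantCoeff u = 0) (k : ℕ) :
    ((2 * (2 + X : ℚ⟦X⟧)⁻¹) ^ k).subst u = (2 * (2 + u)⁻¹) ^ k := by
  have hsubst := HasSubst.of_constantCoeff_zero' hu
  rw [← coe_substAlgHom hsubst, map_pow, map_mul, map_ofNat, coe_substAlgHom,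
    subst_inv hsubst constantCoeff_two_add_X_ne_zero, ← coe_substAlgHom hsubst, map_add,
    map_ofNat, coe_substAlgHom, subst_X hsubst]

theorem euler_gf_eq_subst (k : ℕ) :
    (2 * (exp ℚ + 1)⁻¹) ^ k = ((2 * (2 + X : ℚ⟦X⟧)⁻¹) ^ k).subst (exp ℚ - 1) := by
  rw [subst_two_mul_inv_two_add_X_pow (by simp)]
  congr 3
  ring

theorem changhee_gf_eq_subst (k : ℕ) :
    (2 * (2 + X : ℚ⟦X⟧)⁻¹) ^ k * (1 + X) ^ k
      = ((2 * (2 + X : ℚ⟦X⟧)⁻¹) ^ k).subst ((1 + X)⁻¹ - 1) := by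
  have htwo : (2 + X : ℚ⟦X⟧) * (2 + X)⁻¹ = 1 :=
    PowerSeries.mul_inv_cancel _ constantCoeff_two_add_X_ne_zero
  have hone : (1 + X : ℚ⟦X⟧) * (1 + X)⁻¹ = 1 := PowerSeries.mul_inv_cancel _ (by simp)
  have hfactor : (2 + X : ℚ⟦X⟧)⁻¹ * (1 + X) = (2 + ((1 + X)⁻¹ - 1))⁻¹ := by
    rw [eq_inv_iff_mul_eq_one (by simp [map_ofNat])]
    linear_combination (2 + X : ℚ⟦X⟧)⁻¹ * hone + htwo
  rw [subst_two_mul_inv_two_add_X_pow (by simp), ← mul_pow, mul_assoc, hfactor]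

theorem changhee2_eq_stirling1_euler_general (n : ℕ) (k : ℕ) :
    ChhN k n = ∑ l ∈ Finset.range (n+1), (-1)^l * stirling1 n l * EulerN k l := by
  rw [ChhN, changhee_gf_eq_subst, ← stirlingTransform_subst_exp_sub_one, stirlingTransform_apply]
  simp only [EulerN, euler_gf_eq_subst]

theorem changhee2_eq_stirling1_euler (n : ℕ) (k : ℕ) (hk : 0 < k) :
    ChhN k n = ∑ l ∈ Finset.range (n+1), (-1)^l * stirling1 n l * EulerN k l :=
  changhee2_eq_stirling1_euler_general n k
end

section
/- For all nonnegative integers m and positive integers k, E_m^{(k)}(k) = Σ_{n=0}^{m} Ĉh_n^{(k)} S_2(m,n), where E_m^{(k)}(x) are the higher-order Euler polynomials evaluated at x = k. -/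
/-!
Substituting `t ↦ e^t - 1` into `(2/(2+t))^k (1+t)^k` gives `(2/(e^t+1))^k e^{kt}`, the
generating function of `E_m^{(k)}(k)`. Expanding the substitution as `∑ₙ Ĉh_n^{(k)}/n! (e^t-1)^n`
and using `(e^t-1)^n = n! ∑ₘ S₂(m,n) t^m/m!` gives the identity on comparing coefficients of `t^m`;
only `n ≤ m` contribute since `(e^t-1)^n` has order `n`.
-/

open PowerSeries Finset

namespace PowerSeries

theorem coeff_pow_eq_zero_of_lt {R : Type*} [CommRing R] {g : R⟦X⟧}
    (hg : constantCoeff g = 0) {m n : ℕ} (h : m < n) : coeff m (g ^ n) = 0 :=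
  coeff_of_lt_order _ <| (Nat.cast_lt.mpr h).trans_le (le_order_pow_of_constantCoeff_eq_zero n hg)

theorem coeff_subst_eq_sum_range {R : Type*} [CommRing R] {g : R⟦X⟧}
    (hg : constantCoeff g = 0) (f : R⟦X⟧) (m : ℕ) :
    coeff m (f.subst g) = ∑ n ∈ range (m + 1), coeff n f * coeff m (g ^ n) := by
  rw [coeff_subst' (HasSubst.of_constantCoeff_zero' hg)]
  refine finsum_eq_sum_of_support_subset _ fun n hn => ?_
  contrapose! hn
  simp [coeff_pow_eq_zero_of_lt hg (by simpa using hn)]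

theorem subst_inv_s11 {k : Type*} [Field k] {g : k⟦X⟧} (hg : HasSubst g) {f : k⟦X⟧}
    (hf : constantCoeff f ≠ 0) : (f⁻¹).subst g = (f.subst g : k⟦X⟧)⁻¹ := by
  have hmul : (f⁻¹).subst g * (f.subst g : k⟦X⟧) = 1 := by
    rw [← subst_mul hg, PowerSeries.inv_mul_cancel f hf, ← coe_substAlgHom hg, map_one]
  refine (eq_inv_iff_mul_eq_one ?_).mpr hmul
  have hconst := congrArg constantCoeff hmul
  rw [map_mul, map_one] at hconst
  exact right_ne_zero_of_mul_eq_one hconst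

theorem changhee_gf_subst_exp_sub_one_eq_euler_gf (k : ℕ) :
    ((2 * (2 + X : ℚ⟦X⟧)⁻¹) ^ k * (1 + X) ^ k).subst (exp ℚ - 1)
      = (2 * (exp ℚ + 1)⁻¹) ^ k * rescale (k : ℚ) (exp ℚ) := by
  have hg : HasSubst (exp ℚ - 1) := HasSubst.of_constantCoeff_zero' (by simp)
  have h1 : (1 : ℚ⟦X⟧).subst (exp ℚ - 1) = (1 : ℚ⟦X⟧) := by
    rw [← coe_substAlgHom hg]; exact map_one _
  have h2 : (2 : ℚ⟦X⟧).subst (exp ℚ - 1) = (2 : ℚ⟦X⟧) := by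
    rw [← coe_substAlgHom hg]; exact map_ofNat _ 2
  have two_add_exp_sub_one : (2 : ℚ⟦X⟧) + (exp ℚ - 1) = exp ℚ + 1 := by ring
  rw [subst_mul hg, subst_pow hg, subst_pow hg, subst_mul hg, subst_inv_s11 hg (by simp [map_ofNat]),
    subst_add hg, subst_add hg, subst_X hg, h1, h2,
    two_add_exp_sub_one, add_sub_cancel, exp_pow_eq_rescale_exp]

end PowerSeries

theorem euler_at_k_eq_changhee2_stirling2_general (m : ℕ) (k : ℕ) :
    EulerP k (k : ℚ) m = ∑ n ∈ Finset.range (m+1), ChhN k n * stirling2 m n := by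
  rw [EulerP, ← changhee_gf_subst_exp_sub_one_eq_euler_gf,
    coeff_subst_eq_sum_range (by simp), mul_sum]
  refine sum_congr rfl fun n _ => ?_
  rw [ChhN, stirling2]
  field_simp

theorem euler_at_k_eq_changhee2_stirling2 (m : ℕ) (k : ℕ) (hk : 0 < k) :
    EulerP k (k : ℚ) m = ∑ n ∈ Finset.range (m+1), ChhN k n * stirling2 m n :=
  euler_at_k_eq_changhee2_stirling2_general m k
end

section
/- For all positive integers k and nonnegative integers n, the Changhee numbers of the second kind Ĉh_n^{(k)} equal n! times the coefficient of t^n in (2/(2+t))^k (1+t)^k, and this equals Σ_{m=0}^{min(n,k)} (n!/(n-m)!) binomial(k,m) (-1/2)^{n-m} (n-m)! binomial(n-m+k-1, n-m). -/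
open PowerSeries Finset

lemma aux1 (k : ℕ) (hk : 0 < k) :
    (2 * (2 + X : ℚ⟦X⟧)⁻¹)^k = rescale (-(1/2)) ((invOneSubPow ℚ k).val) := by
  have hc : constantCoeff (R := ℚ) (2 + X) ≠ 0 := by
    simp [map_ofNat]
  have h2 : rescale (-(1/2) : ℚ) ((1 - X)^k) = (1 + C (R := ℚ) (1/2) * X)^k := by
    rw [map_pow, map_sub, map_one, rescale_X,
      show (C (R := ℚ)) (-(1/2)) = -(C (R := ℚ) (1/2)) by rw [← map_neg]]
    ring
  have hu : rescale (-(1/2) : ℚ) ((invOneSubPow ℚ k).val) * (1 + C (R := ℚ) (1/2) * X)^k = 1 := by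
    rw [← h2, ← map_mul, ← invOneSubPow_inv_eq_one_sub_pow, (invOneSubPow ℚ k).val_inv, map_one]
  have ha : (2 * (2 + X : ℚ⟦X⟧)⁻¹)^k * (1 + C (R := ℚ) (1/2) * X)^k = 1 := by
    rw [← mul_pow]
    have : (2 : ℚ⟦X⟧) * (2 + X)⁻¹ * (1 + C (R := ℚ) (1/2) * X) = (2 + X)⁻¹ * (2 + X) := by
      have h12 : ((C (R := ℚ)) (1/2) : ℚ⟦X⟧) * 2 = 1 := by
        rw [show (2:ℚ⟦X⟧) = C (R := ℚ) 2 by simp [map_ofNat], ← map_mul]; norm_num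
      ring_nf
      rw [mul_assoc, h12, mul_one]
    rw [this, PowerSeries.inv_mul_cancel _ hc, one_pow]
  calc (2 * (2 + X : ℚ⟦X⟧)⁻¹)^k
      = (2 * (2 + X : ℚ⟦X⟧)⁻¹)^k * (rescale (-(1/2) : ℚ) ((invOneSubPow ℚ k).val) * (1 + C (R := ℚ) (1/2) * X)^k) := by rw [hu, mul_one]
    _ = rescale (-(1/2) : ℚ) ((invOneSubPow ℚ k).val) * ((2 * (2 + X : ℚ⟦X⟧)⁻¹)^k * (1 + C (R := ℚ) (1/2) * X)^k) := by ring
    _ = _ := by rw [ha, mul_one]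

lemma aux2 (k : ℕ) (hk : 0 < k) (j : ℕ) :
    coeff j ((2 * (2 + X : ℚ⟦X⟧)⁻¹)^k) = (-1/2 : ℚ)^j * ((j+k-1).choose j) := by
  rw [aux1 k hk, coeff_rescale, invOneSubPow_val_eq_mk_sub_one_add_choose_of_pos _ _ hk, coeff_mk]
  have h1 : (k-1+j).choose (k-1) = (j+k-1).choose j := by
    have h2 : j + k - 1 = k - 1 + j := by omega
    rw [h2, ← Nat.choose_symm (Nat.le_add_right (k-1) j)]
    congr 1; omega
  rw [h1]
  norm_num

lemma aux3 (k m : ℕ) : coeff m ((1 + X : ℚ⟦X⟧)^k) = k.choose m := by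
  rw [add_comm, add_pow]
  simp only [one_pow, map_sum, mul_one, ← map_natCast (C (R := ℚ)), coeff_mul_C, coeff_X_pow,
    ite_mul, one_mul, zero_mul]
  rw [Finset.sum_ite_eq (Finset.range (k+1)) m (fun x => ((k.choose x : ℚ)))]
  by_cases h : m ≤ k
  · simp [Nat.lt_succ_iff, h]
  · simp [Nat.lt_succ_iff, h, Nat.choose_eq_zero_of_lt (by omega : k < m)]

theorem changhee2_closed_formula (k : ℕ) (hk : 0 < k) (n : ℕ) :
    ChhN k n = ∑ m ∈ Finset.range (n+1),
      (m.factorial : ℚ) * (k.choose m) * (n.choose m) *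
        (-1/2)^(n-m) * ((n-m).factorial) * ((n-m+k-1).choose (n-m)) := by
  unfold ChhN
  rw [mul_comm ((2 * (2 + PowerSeries.X : PowerSeries ℚ)⁻¹)^k), coeff_mul,
    Finset.Nat.sum_antidiagonal_eq_sum_range_succ_mk, Finset.mul_sum]
  refine Finset.sum_congr rfl fun m hm => ?_
  rw [aux3, aux2 k hk]
  have hmn : m ≤ n := Nat.lt_succ_iff.mp (Finset.mem_range.mp hm)
  have hfac : (n.factorial : ℚ) = m.factorial * (n.choose m) * (n-m).factorial := by
    rw_mod_cast [← Nat.choose_mul_factorial_mul_factorial hmn]; push_cast; ring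
  rw [hfac]; ring
end
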